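/- arXiv:1310.8063 — 4 statements merged into one kernel-verified Lean document; each statement's English description precedes it below -/
import Mathlib

section
/- Let n ≥ 1 and for each i ∈ {1,...,n} let f_i : {0,1} → ℤ satisfy f_i(1) > f_i(0) and f_i(1) − f_i(0) > Σ_{j=1}^{i−1} (f_j(1) − f_j(0)). Define F(x) = Σ_{i=1}^n f_i(x_i) for x ∈ {0,1}^n, where x_i denotes the i-th least significant bit. Then for all x, y ∈ {0,1}^n, x > y (as natural numbers under the standard binary interpretation) implies F(x) > F(y). -/
/-- value of a bit string, bit `i` (0-indexed here, i.e. the (i+1)-st least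
significant bit) has weight `2^i`. -/
def bval {n : ℕ} (x : Fin n → Bool) : ℕ := ∑ i, (x i).toNat * 2 ^ (i : ℕ)

/-!
Both `bval` and `F` are, up to an additive constant, sums of superincreasing nonnegative weights
over the set of positions where the bit is set. Such a sum is strictly monotone for the colex
order on sets: at the largest position where two sets differ, the weight present on one side
exceeds the sum of all smaller weights. As colex is a linear order, `bval` and `F` induce the
same strict order on bit strings.
-/

open Finset Finset.Colex

section Superincreasing

variable {α R : Type*} [LinearOrder α] [Fintype α]
  [AddCommMonoid R] [PartialOrder R] [IsOrderedCancelAddMonoid R]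

def IsSuperincreasing (w : α → R) : Prop :=
  ∀ i, ∑ j ∈ univ.filter (· < i), w j < w i

theorem IsSuperincreasing.sum_lt_sum_of_toColex_lt {w : α → R} (hw : IsSuperincreasing w)
    (hw₀ : ∀ i, 0 ≤ w i) {s t : Finset α} (hst : toColex s < toColex t) :
    ∑ i ∈ s, w i < ∑ i ∈ t, w i := by
  obtain ⟨a, hat, has, hlt⟩ := toColex_lt_toColex_iff_exists_forall_lt.mp hst
  have hsdiff : ∑ i ∈ s \ t, w i < ∑ i ∈ t \ s, w i :=
    calc ∑ i ∈ s \ t, w i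
        ≤ ∑ j ∈ univ.filter (· < a), w j :=
          sum_le_sum_of_subset_of_nonneg
            (fun b hb ↦ by simpa using hlt b (mem_sdiff.mp hb).1 (mem_sdiff.mp hb).2)
            (fun i _ _ ↦ hw₀ i)
      _ < w a := hw a
      _ ≤ ∑ i ∈ t \ s, w i :=
          single_le_sum (fun i _ ↦ hw₀ i) (mem_sdiff.mpr ⟨hat, has⟩)
  rw [← sum_inter_add_sum_sdiff s t, ← sum_inter_add_sum_sdiff t s, inter_comm]
  exact (add_lt_add_iff_left _).mpr hsdiff

theorem IsSuperincreasing.strictMono_sum {w : α → R} (hw : IsSuperincreasing w)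
    (hw₀ : ∀ i, 0 ≤ w i) :
    StrictMono fun s : Colex (Finset α) ↦ ∑ i ∈ ofColex s, w i :=
  fun _ _ ↦ hw.sum_lt_sum_of_toColex_lt hw₀

end Superincreasing

theorem isSuperincreasing_two_pow (n : ℕ) : IsSuperincreasing fun i : Fin n ↦ 2 ^ (i : ℕ) :=
  fun _ ↦ (sum_map _ Fin.valEmbedding (2 ^ ·)).symm.trans_lt (Nat.geomSum_lt le_rfl (by simp))

theorem sum_apply_eq_sum_false_add_sum_filter {ι R : Type*} [Fintype ι] [AddCommGroup R]
    (g : ι → Bool → R) (x : ι → Bool) :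
    ∑ i, g i (x i) = ∑ i, g i false + ∑ i ∈ univ.filter (x · = true), (g i true - g i false) := by
  rw [sum_filter, ← sum_add_distrib]
  refine sum_congr rfl fun i _ ↦ ?_
  cases x i <;> simp

theorem bval_eq_sum_filter {n : ℕ} (x : Fin n → Bool) :
    bval x = ∑ i ∈ univ.filter (x · = true), 2 ^ (i : ℕ) := by
  rw [bval, sum_filter]
  refine sum_congr rfl fun i _ ↦ ?_
  cases x i <;> simp

theorem stmt0_general (n : ℕ) (f : Fin n → Bool → ℤ)
    (hmono : ∀ i, f i true > f i false)
    (hdom : ∀ i : Fin n,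
      f i true - f i false >
        ∑ j ∈ Finset.univ.filter (fun j => j < i), (f j true - f j false))
    (F : (Fin n → Bool) → ℤ)
    (hF : ∀ x, F x = ∑ i, f i (x i)) :
    ∀ x y : Fin n → Bool, bval x > bval y → F x > F y := by
  intro x y hxy
  have hsup : IsSuperincreasing fun i ↦ f i true - f i false := hdom
  have hcolex : toColex (univ.filter (y · = true)) < toColex (univ.filter (x · = true)) :=
    ((isSuperincreasing_two_pow n).strictMono_sum fun _ ↦ Nat.zero_le _).lt_iff_lt.mp <| by
      simpa only [bval_eq_sum_filter, ofColex_toColex] using hxy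
  rw [gt_iff_lt, hF, hF, sum_apply_eq_sum_false_add_sum_filter f x,
    sum_apply_eq_sum_false_add_sum_filter f y, add_lt_add_iff_left]
  exact hsup.sum_lt_sum_of_toColex_lt (fun i ↦ sub_nonneg.mpr (hmono i).le) hcolex

theorem stmt0 (n : ℕ) (hn : 1 ≤ n) (f : Fin n → Bool → ℤ)
    (hmono : ∀ i, f i true > f i false)
    (hdom : ∀ i : Fin n,
      f i true - f i false >
        ∑ j ∈ Finset.univ.filter (fun j => j < i), (f j true - f j false))
    (F : (Fin n → Bool) → ℤ)
    (hF : ∀ x, F x = ∑ i, f i (x i)) :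
    ∀ x y : Fin n → Bool, bval x > bval y → F x > F y :=
  stmt0_general n f hmono hdom F hF
end

section
/- Let k ≥ 2, l ≥ 1, s ≥ 0 be integers and define F(x) = Σ_{i=1}^{len(x)} f_i(x_i) where f_i(0) = s, f_i(1) = s + k^i l, and len(x) is the number of bits of x without leading zeros. If a and b are positive integers with a having strictly more bits than b (i.e. i = len(a) > j = len(b)), then F(a) > F(b). -/
/-- Protocol B function on positive integers: `F a = ∑_{i=1}^{len a} f_i(a_i)`
with `f_i(0)=s`, `f_i(1)=s+k^i l`, where `a_i` is the i-th least significant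
bit of `a` and `len a = Nat.size a` is the number of bits without leading
zeros. -/
def FB (s k l : ℤ) (a : ℕ) : ℤ :=
  ∑ i ∈ Finset.Icc 1 (Nat.size a),
    (if a.testBit (i - 1) then s + k ^ i * l else s)

/-!
Split `F x = s · len x + Σ_{x_i = 1} k^i l`. The leading bit of `a` alone contributes
`k^{len a} l`, which exceeds the whole bit-part of `F b`, since `Σ_{i ≤ j} k^i < k^{j+1}`
for `k ≥ 2`; and `s · len b ≤ s · len a` because `s ≥ 0`.
-/

open Finset

theorem Nat.testBit_size_sub_one {n : ℕ} (hn : n ≠ 0) : n.testBit (n.size - 1) = true := by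
  have hpos : 0 < n.size := Nat.size_pos.mpr (Nat.pos_of_ne_zero hn)
  apply Nat.testBit_of_two_pow_le_and_two_pow_add_one_gt
  · exact Nat.lt_size.mp (by omega)
  · rw [Nat.sub_add_cancel hpos]
    exact Nat.lt_size_self n

theorem Int.geomSum_lt {k : ℤ} (hk : 2 ≤ k) {s : Finset ℕ} {n : ℕ} (hs : ∀ i ∈ s, i < n) :
    ∑ i ∈ s, k ^ i < k ^ n := by
  lift k to ℕ using by omega
  exact_mod_cast Nat.geomSum_lt (by omega) hs

theorem FB_eq (s k l : ℤ) (a : ℕ) :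
    FB s k l a = s * a.size + ∑ i ∈ Icc 1 a.size, if a.testBit (i - 1) then k ^ i * l else 0 := by
  have hsplit : ∀ i, (if a.testBit (i - 1) then s + k ^ i * l else s) =
      s + if a.testBit (i - 1) then k ^ i * l else 0 := fun i => by split_ifs <;> simp
  simp_rw [FB, hsplit, sum_add_distrib, sum_const, Nat.card_Icc, nsmul_eq_mul']
  simp

theorem le_FB_of_ne_zero {s k l : ℤ} (hk : 0 ≤ k) (hl : 0 ≤ l) {a : ℕ} (ha : a ≠ 0) :
    s * a.size + k ^ a.size * l ≤ FB s k l a := by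
  have htop : a.size ∈ Icc 1 a.size := by
    simpa [Nat.one_le_iff_ne_zero, Nat.size_eq_zero] using ha
  rw [FB_eq]
  gcongr
  refine le_of_eq_of_le ?_ (single_le_sum (fun i _ => ?_) htop)
  · rw [if_pos (Nat.testBit_size_sub_one ha)]
  · split_ifs <;> positivity

theorem FB_le {s k l : ℤ} (hk : 0 ≤ k) (hl : 0 ≤ l) (a : ℕ) :
    FB s k l a ≤ s * a.size + (∑ i ∈ Icc 1 a.size, k ^ i) * l := by
  rw [FB_eq, sum_mul]
  gcongr with i
  split_ifs
  · rfl
  · positivity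

theorem stmt3_general (s k l : ℤ) (hs : 0 ≤ s) (hk : 2 ≤ k) (hl : 1 ≤ l)
    (a b : ℕ)
    (hlen : Nat.size a > Nat.size b) :
    FB s k l a > FB s k l b := by
  have ha : a ≠ 0 := by
    rintro rfl
    simp at hlen
  have hgeom : ∑ i ∈ Icc 1 b.size, k ^ i < k ^ a.size :=
    Int.geomSum_lt hk fun i hi => by grind
  have hsize : s * b.size ≤ s * a.size := by gcongr
  calc FB s k l b ≤ s * b.size + (∑ i ∈ Icc 1 b.size, k ^ i) * l := FB_le (by omega) (by omega) b
    _ < s * a.size + k ^ a.size * l := by nlinarith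
    _ ≤ FB s k l a := le_FB_of_ne_zero (by omega) (by omega) ha

theorem stmt3 (s k l : ℤ) (hs : 0 ≤ s) (hk : 2 ≤ k) (hl : 1 ≤ l)
    (a b : ℕ) (ha : 0 < a) (hb : 0 < b)
    (hlen : Nat.size a > Nat.size b) :
    FB s k l a > FB s k l b :=
  stmt3_general s k l hs hk hl a b hlen
end

section
/- Let b ∈ {0,1}^n, S = {i : b_i = 0}, Y = {i : b_i = 1}, and suppose f_i : {0,1} → ℤ satisfy: for all i ∈ Y, f_i(1) − f_i(0) > Σ_{j ∈ S, j < i} (f_j(1) − f_j(0)), and for all i ∈ S, f_i(1) − f_i(0) > Σ_{j ∈ Y, j < i} (f_j(1) − f_j(0)), and f_i(1) > f_i(0) for all i. Define F(x) = Σ_{i=1}^n f_i(x_i). Then for every x ∈ {0,1}^n: x < b ⟹ F(x) < F(b). -/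
/-! If `x < b` in binary, then at the highest bit `k` where they differ `x` has `0` and `b` has `1`.
Turning `x` into `b` gains `f_k(1) - f_k(0)` at bit `k`, changes nothing above it, and below it
loses at most `f_j(1) - f_j(0)` at each `j` with `b_j = 0` (bits with `b_j = 1` can only gain);
the hypothesis at `k` outweighs these losses. The same estimate for `f_i(c) = c·2^i` shows that
the highest differing bit decides the binary order. -/

open Finset

section HighestDifference

variable {ι M : Type*} [Fintype ι] [LinearOrder ι]
  [AddCommGroup M] [PartialOrder M] [IsOrderedAddMonoid M]

theorem sum_lt_sum_of_highest_diff (g : ι → Bool → M) (hg : ∀ i, g i false ≤ g i true)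
    {x b : ι → Bool} {k : ι} (hxk : x k = false) (hbk : b k = true)
    (hhigh : ∀ j, k < j → x j = b j)
    (hgain : ∑ j ∈ univ.filter (fun j => b j = false ∧ j < k), (g j true - g j false) <
      g k true - g k false) :
    ∑ i, g i (x i) < ∑ i, g i (b i) := by
  set d : ι → M := fun i => g i true - g i false
  have hd : ∀ i, 0 ≤ d i := fun i => sub_nonneg.2 (hg i)
  -- Positions above `k` contribute nothing, and a lower position can lose at most `d i`,
  -- and only where `b i = false`.
  set lower : ι → M := fun i =>
    (if i = k then d k else 0) - if b i = false ∧ i < k then d i else 0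
  have hlower : ∀ i ∈ univ, lower i ≤ g i (b i) - g i (x i) := by
    intro i _
    rcases lt_trichotomy i k with hik | rfl | hki
    · have hd_i := hd i
      simp only [lower, d, if_neg hik.ne, zero_sub]
      cases hb : b i <;> cases hx : x i <;> simp_all
    · simp [lower, d, hxk, hbk]
    · simp [lower, hki.ne', hki.not_gt, hhigh i hki]
  have hsum_lower : ∑ i, lower i =
      d k - ∑ j ∈ univ.filter (fun j => b j = false ∧ j < k), d j := by
    simp only [lower, sum_sub_distrib, sum_ite_eq', mem_univ, if_true, sum_filter]
  rw [← sub_pos, ← sum_sub_distrib]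
  calc (0 : M) < ∑ i, lower i := by rw [hsum_lower]; exact sub_pos.2 hgain
    _ ≤ _ := sum_le_sum hlower

end HighestDifference

theorem exists_highest_ne {ι α : Type*} [Fintype ι] [LinearOrder ι] {x b : ι → α} (h : x ≠ b) :
    ∃ k, x k ≠ b k ∧ ∀ j, k < j → x j = b j := by
  classical
  obtain ⟨i, hi⟩ := Function.ne_iff.1 h
  obtain ⟨k, hk, hmax⟩ := exists_max_image (univ.filter fun j => x j ≠ b j) id ⟨i, by simpa⟩
  refine ⟨k, (mem_filter.1 hk).2, fun j hkj => ?_⟩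
  by_contra hj
  exact (hmax j (by simpa)).not_gt hkj

theorem sum_two_pow_lt_two_pow {n : ℕ} (s : Finset (Fin n)) {k : Fin n} (hs : ∀ j ∈ s, j < k) :
    ∑ j ∈ s, (2 : ℤ) ^ (j : ℕ) < 2 ^ (k : ℕ) := by
  have := Nat.geomSum_lt le_rfl (s := s.map Fin.valEmbedding) (n := k) (by simpa using hs)
  rw [sum_map] at this
  exact_mod_cast this

theorem bval_lt_of_highest_diff {n : ℕ} {x b : Fin n → Bool} {k : Fin n} (hxk : x k = false)
    (hbk : b k = true) (hhigh : ∀ j, k < j → x j = b j) : bval x < bval b := by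
  have key := sum_lt_sum_of_highest_diff
    (fun (i : Fin n) (c : Bool) => ((c.toNat * 2 ^ (i : ℕ) : ℕ) : ℤ)) (fun i => by simp)
    hxk hbk hhigh
    (by simpa using sum_two_pow_lt_two_pow _ fun j hj => (mem_filter.1 hj).2.2)
  exact_mod_cast key

theorem exists_highest_diff_of_bval_lt {n : ℕ} {x b : Fin n → Bool} (h : bval x < bval b) :
    ∃ k, x k = false ∧ b k = true ∧ ∀ j, k < j → x j = b j := by
  obtain ⟨k, hk, hhigh⟩ := exists_highest_ne (fun hxb : x = b => h.ne (congrArg bval hxb))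
  cases hx : x k <;> cases hb : b k <;> simp only [hx, hb, ne_eq, not_true_eq_false] at hk
  · exact ⟨k, hx, hb, hhigh⟩
  · exact absurd h (bval_lt_of_highest_diff hb hx fun j hj => (hhigh j hj).symm).not_gt

theorem stmt9_general (n : ℕ) (b : Fin n → Bool) (f : Fin n → Bool → ℤ)
    (hmono : ∀ i, f i true > f i false)
    (hfall : ∀ i : Fin n, b i = true →
      f i true - f i false >
        ∑ j ∈ Finset.univ.filter (fun j => b j = false ∧ j < i),
          (f j true - f j false))
    (F : (Fin n → Bool) → ℤ)
    (hF : ∀ x, F x = ∑ i, f i (x i)) :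
    ∀ x : Fin n → Bool, bval x < bval b → F x < F b := by
  intro x hlt
  obtain ⟨k, hxk, hbk, hhigh⟩ := exists_highest_diff_of_bval_lt hlt
  rw [hF, hF]
  exact sum_lt_sum_of_highest_diff f (fun i => (hmono i).le) hxk hbk hhigh (hfall k hbk)

theorem stmt9 (n : ℕ) (b : Fin n → Bool) (f : Fin n → Bool → ℤ)
    (hmono : ∀ i, f i true > f i false)
    (hfall : ∀ i : Fin n, b i = true →
      f i true - f i false >
        ∑ j ∈ Finset.univ.filter (fun j => b j = false ∧ j < i),
          (f j true - f j false))
    (hrise : ∀ i : Fin n, b i = false →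
      f i true - f i false >
        ∑ j ∈ Finset.univ.filter (fun j => b j = true ∧ j < i),
          (f j true - f j false))
    (F : (Fin n → Bool) → ℤ)
    (hF : ∀ x, F x = ∑ i, f i (x i)) :
    ∀ x : Fin n → Bool, bval x < bval b → F x < F b :=
  stmt9_general n b f hmono hfall F hF
end

section
/- With the same setup as the order-preserving-at-b construction (rises dominate earlier falls and falls dominate earlier rises, and f_i(1) > f_i(0) for all i), for every x ∈ {0,1}^n: x > b ⟹ F(x) > F(b). Combining with the other direction, F(x) < F(b) ⟺ x < b and F(x) > F(b) ⟺ x > b for all x. -/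
/-!
Both `bval` and, up to an additive constant, `F` are weighted bit counts: `bval x` weighs bit `j`
by `2 ^ j`, and `F x` by `f j true - f j false`. For `x ≠ b` let `i` be the highest position where
they differ. For either weight the comparison with `b` is decided by bit `i` alone, since the
weight of `i` exceeds the total weight of the lower positions that could pull the other way: for
`2 ^ j` this is the geometric-sum bound, for `f` it is the hypothesis on the rises and falls of `b`.
-/

open Finset

section BitSum

variable {ι M : Type*} [Fintype ι]

def bitSum [AddCommMonoid M] (w : ι → M) (x : ι → Bool) : M :=
  ∑ j ∈ univ.filter (fun j => x j = true), w j

theorem exists_ne_forall_gt_eq [LinearOrder ι] {α : Type*} {x b : ι → α} (h : x ≠ b) :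
    ∃ i, x i ≠ b i ∧ ∀ j, i < j → x j = b j := by
  classical
  have hne : (univ.filter fun j => x j ≠ b j).Nonempty := by
    simpa [Finset.Nonempty, Function.ne_iff] using h
  obtain ⟨i, hi, hmax⟩ := exists_max_image _ id hne
  exact ⟨i, (mem_filter.1 hi).2, fun j hij => by_contra fun hj =>
    (hmax j (by simpa using hj)).not_gt hij⟩

theorem sum_bool_eq_add_bitSum [AddCommGroup M] (f : ι → Bool → M) (x : ι → Bool) :
    ∑ j, f j (x j) = ∑ j, f j false + bitSum (fun j => f j true - f j false) x := by
  rw [bitSum, sum_filter, ← sum_add_distrib]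
  refine sum_congr rfl fun j _ => ?_
  cases x j <;> simp

theorem bitSum_not_add [AddCommMonoid M] (w : ι → M) (x : ι → Bool) :
    bitSum w (fun j => !x j) + bitSum w x = ∑ j, w j := by
  rw [add_comm, bitSum, bitSum, ← sum_filter_add_sum_filter_not univ (fun j => x j = true)]
  simp

variable [LinearOrder ι] [AddCommMonoid M] [LinearOrder M] [IsOrderedCancelAddMonoid M]
  {w : ι → M} {x b : ι → Bool} {i : ι}

theorem bitSum_lt_bitSum_of_top_rise (hw : ∀ j, 0 ≤ w j) (hxi : x i = true) (hbi : b i = false)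
    (hagree : ∀ j, i < j → x j = b j)
    (hdom : ∑ j ∈ univ.filter (fun j => b j = true ∧ j < i), w j < w i) :
    bitSum w b < bitSum w x := by
  set high := univ.filter fun j => b j = true ∧ i < j
  have hb : bitSum w b =
      ∑ j ∈ univ.filter (fun j => b j = true ∧ j < i), w j + ∑ j ∈ high, w j := by
    rw [bitSum, ← sum_filter_add_sum_filter_not _ (· < i), filter_filter, filter_filter]
    congr 2
    ext j
    simp only [mem_filter, mem_univ, true_and, not_lt, le_iff_eq_or_lt, high]
    grind
  have hx : w i + ∑ j ∈ high, w j ≤ bitSum w x := by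
    rw [← sum_insert fun h => by simp [high] at h]
    refine sum_le_sum_of_subset_of_nonneg (fun j hj => ?_) fun j _ _ => hw j
    rcases mem_insert.1 hj with rfl | hj
    · simpa using hxi
    · simp only [high, mem_filter, mem_univ, true_and] at hj
      simpa [hagree j hj.2] using hj.1
  rw [hb]
  exact (add_lt_add_of_lt_of_le hdom le_rfl).trans_le hx

theorem bitSum_lt_bitSum_of_top_fall (hw : ∀ j, 0 ≤ w j) (hxi : x i = false) (hbi : b i = true)
    (hagree : ∀ j, i < j → x j = b j)
    (hdom : ∑ j ∈ univ.filter (fun j => b j = false ∧ j < i), w j < w i) :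
    bitSum w x < bitSum w b := by
  -- complementing both words turns this fall into a rise, and `bitSum` into `∑ w - bitSum`
  have hnot : bitSum w (fun j => !b j) < bitSum w (fun j => !x j) :=
    bitSum_lt_bitSum_of_top_rise (i := i) hw (by simp [hxi]) (by simp [hbi])
      (fun j hj => by simp [hagree j hj]) (by simpa using hdom)
  have hsum := (bitSum_not_add w x).trans (bitSum_not_add w b).symm
  by_contra! hle
  exact (add_lt_add_of_lt_of_le hnot hle).ne' hsum

end BitSum

section Fin

variable {n : ℕ}

theorem bval_eq_bitSum (x : Fin n → Bool) :
    bval x = bitSum (fun j : Fin n => 2 ^ (j : ℕ)) x := by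
  rw [bval, bitSum, sum_filter]
  refine sum_congr rfl fun j _ => ?_
  cases x j <;> simp

theorem sum_two_pow_lt_of_forall_lt {s : Finset (Fin n)} {i : Fin n} (hs : ∀ j ∈ s, j < i) :
    ∑ j ∈ s, 2 ^ (j : ℕ) < 2 ^ (i : ℕ) := by
  simpa using Nat.geomSum_lt (s := s.map Fin.valEmbedding) le_rfl (by simpa using hs)

theorem bval_lt_and_sum_lt_or {b x : Fin n → Bool} {f : Fin n → Bool → ℤ}
    (hmono : ∀ i, f i false < f i true)
    (hfall : ∀ i, b i = true →
      ∑ j ∈ univ.filter (fun j => b j = false ∧ j < i), (f j true - f j false) <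
        f i true - f i false)
    (hrise : ∀ i, b i = false →
      ∑ j ∈ univ.filter (fun j => b j = true ∧ j < i), (f j true - f j false) <
        f i true - f i false)
    (hx : x ≠ b) :
    bval b < bval x ∧ ∑ j, f j (b j) < ∑ j, f j (x j) ∨
      bval x < bval b ∧ ∑ j, f j (x j) < ∑ j, f j (b j) := by
  obtain ⟨i, hi, hagree⟩ := exists_ne_forall_gt_eq hx
  have hpow : ∀ p : Fin n → Prop, [DecidablePred p] →
      ∑ j ∈ univ.filter (fun j => p j ∧ j < i), 2 ^ (j : ℕ) < 2 ^ (i : ℕ) :=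
    fun p _ => sum_two_pow_lt_of_forall_lt fun j hj => (mem_filter.1 hj).2.2
  have hd : ∀ j, 0 ≤ f j true - f j false := fun j => sub_nonneg.2 (hmono j).le
  rw [sum_bool_eq_add_bitSum f x, sum_bool_eq_add_bitSum f b, add_lt_add_iff_left,
    add_lt_add_iff_left, bval_eq_bitSum, bval_eq_bitSum]
  cases hxi : x i
  · have hbi : b i = true := by simpa [hxi] using hi.symm
    exact .inr ⟨bitSum_lt_bitSum_of_top_fall (fun _ => Nat.zero_le _) hxi hbi hagree (hpow _),
      bitSum_lt_bitSum_of_top_fall hd hxi hbi hagree (hfall i hbi)⟩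
  · have hbi : b i = false := by simpa [hxi] using hi.symm
    exact .inl ⟨bitSum_lt_bitSum_of_top_rise (fun _ => Nat.zero_le _) hxi hbi hagree (hpow _),
      bitSum_lt_bitSum_of_top_rise hd hxi hbi hagree (hrise i hbi)⟩

end Fin

theorem stmt10 (n : ℕ) (b : Fin n → Bool) (f : Fin n → Bool → ℤ)
    (hmono : ∀ i, f i true > f i false)
    (hfall : ∀ i : Fin n, b i = true →
      f i true - f i false >
        ∑ j ∈ Finset.univ.filter (fun j => b j = false ∧ j < i),
          (f j true - f j false))
    (hrise : ∀ i : Fin n, b i = false →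
      f i true - f i false >
        ∑ j ∈ Finset.univ.filter (fun j => b j = true ∧ j < i),
          (f j true - f j false))
    (F : (Fin n → Bool) → ℤ)
    (hF : ∀ x, F x = ∑ i, f i (x i)) :
    (∀ x : Fin n → Bool, bval x > bval b → F x > F b) ∧
    (∀ x : Fin n → Bool, (F x < F b ↔ bval x < bval b) ∧
                          (F x > F b ↔ bval x > bval b)) := by
  have hcmp : ∀ x, (F x < F b ↔ bval x < bval b) ∧ (F x > F b ↔ bval x > bval b) := by
    intro x
    rcases eq_or_ne x b with rfl | hx
    · simp
    rw [hF x, hF b]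
    rcases bval_lt_and_sum_lt_or hmono hfall hrise hx with ⟨h, h'⟩ | ⟨h, h'⟩ <;> omega
  exact ⟨fun x => (hcmp x).2.2, hcmp⟩
end
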